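/- Let F be a graph with n vertices and m edges such that every vertex two-coloring of F has at least (1 − α)m monochromatic edges. Then for every t ≥ 1, every vertex two-coloring of the t-blowup F[t] has at least (1 − α)·m·t² monochromatic edges. -/

import Mathlib

/-- The `t`-blowup of a graph `F`: each vertex is replaced by an independent set of
size `t`, and each edge by a complete bipartite graph. -/
def SimpleGraph.blowup {V : Type*} (F : SimpleGraph V) (t : ℕ) :
    SimpleGraph (V × Fin t) where
  Adj x y := F.Adj x.1 y.1
  symm := ⟨fun _ _ h => F.adj_symm h⟩
  loopless := ⟨fun x h => F.irrefl h⟩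

/-!
Each map `f : V → Fin t` selects one copy `(v, f v)` of every vertex, and `χ` restricted to
these copies is a coloring of `F`, so it has at least `(1 - α) m` monochromatic edges. An edge
`{(u, i), (v, j)}` of `F[t]` is selected by exactly the `t ^ (n - 2)` maps with `f u = i` and
`f v = j`, so summing over all `t ^ n` maps gives
`t ^ n (1 - α) m ≤ t ^ (n - 2) · #(monochromatic edges of F[t])`.
Edges are counted as ordered adjacent pairs, twice as many, to avoid sums over `Sym2`.
-/

open Finset

section FunctionCounting

variable {V β : Type*} [Fintype V] [DecidableEq V] [Fintype β] [DecidableEq β]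

theorem card_filter_apply_eq_and_apply_eq {u v : V} (huv : u ≠ v) (i j : β) :
    #{f : V → β | f u = i ∧ f v = j} = Fintype.card β ^ (Fintype.card V - 2) := by
  set s := Function.update (fun _ : V ↦ (univ : Finset β)) u {i}
  have hfilter : ({f : V → β | f u = i ∧ f v = j} : Finset _)
      = {f ∈ Fintype.piFinset s | f v = j} := by
    rw [Fintype.piFinset_update_singleton_eq_filter_piFinset_eq _ u (mem_univ i),
      Fintype.piFinset_univ, filter_filter]
  have hu : u ∈ univ.erase v := mem_erase.2 ⟨huv, mem_univ u⟩
  have hs : ∀ x ∈ (univ.erase v).erase u, #(s x) = Fintype.card β := fun x hx ↦ by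
    simp [s, Function.update_of_ne (ne_of_mem_erase hx)]
  rw [hfilter, Fintype.card_filter_piFinset_eq_of_mem (α := fun _ ↦ β) s v (a := j)
    (by simp [s, huv.symm]), ← mul_prod_erase _ _ hu, prod_congr rfl hs, prod_const]
  simp [s, card_erase_of_mem hu, Nat.sub_sub]

theorem sum_fun_apply_apply {M : Type*} [AddCommMonoid M] {u v : V} (huv : u ≠ v)
    (g : β → β → M) :
    ∑ f : V → β, g (f u) (f v)
      = Fintype.card β ^ (Fintype.card V - 2) • ∑ i, ∑ j, g i j := by
  rw [← sum_fiberwise univ (fun f : V → β ↦ (f u, f v)), Fintype.sum_prod_type, smul_sum]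
  refine sum_congr rfl fun i _ ↦ ?_
  rw [smul_sum]
  refine sum_congr rfl fun j _ ↦ ?_
  have hfiber : ∀ f ∈ ({f : V → β | (f u, f v) = (i, j)} : Finset _),
      g (f u) (f v) = g i j := fun f hf ↦ by simp_all
  rw [sum_congr rfl hfiber, sum_const]
  simp only [Prod.mk.injEq, card_filter_apply_eq_and_apply_eq huv]

end FunctionCounting

namespace SimpleGraph

section Monochromatic

variable {W κ : Type*} (G : SimpleGraph W) (χ : W → κ)

def monochromatic : SimpleGraph W where
  Adj u v := G.Adj u v ∧ χ u = χ v
  symm := ⟨fun _ _ h ↦ ⟨h.1.symm, h.2.symm⟩⟩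
  loopless := ⟨fun _ h ↦ G.irrefl h.1⟩

theorem edgeSet_monochromatic :
    (G.monochromatic χ).edgeSet = {e | e ∈ G.edgeSet ∧ ∃ c, ∀ x ∈ e, χ x = c} := by
  ext e
  induction e using Sym2.ind with
  | _ u v =>
    simp only [mem_edgeSet, monochromatic, Set.mem_ofPred_eq, Sym2.mem_iff, forall_eq_or_imp,
      forall_eq, exists_eq_left']
    exact and_congr_right fun _ ↦ eq_comm

theorem two_mul_card_monochromatic_edges [Fintype W] [DecidableRel G.Adj] [DecidableEq κ] :
    2 * Nat.card {e : Sym2 W // e ∈ G.edgeSet ∧ ∃ c, ∀ x ∈ e, χ x = c}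
      = #{p : W × W | G.Adj p.1 p.2 ∧ χ p.1 = χ p.2} := by
  classical
  have hcard : Nat.card {e : Sym2 W // e ∈ G.edgeSet ∧ ∃ c, ∀ x ∈ e, χ x = c}
      = #(G.monochromatic χ).edgeFinset := by
    rw [← Set.ncard_coe_finset, coe_edgeFinset, edgeSet_monochromatic, ← Nat.card_coe_set_eq]
    rfl
  rw [hcard, two_mul_card_edgeFinset]
  congr 1
  ext
  simp only [mem_filter, mem_univ, true_and]
  rfl

end Monochromatic

variable {V κ : Type*} [Fintype V] [DecidableEq V] [DecidableEq κ] (F : SimpleGraph V)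
  [DecidableRel F.Adj]

instance (t : ℕ) : DecidableRel (F.blowup t).Adj :=
  fun x y ↦ inferInstanceAs (Decidable (F.Adj x.1 y.1))

theorem sq_mul_sum_card_transversal_eq_pow_mul_card_blowup (t : ℕ) (χ : V × Fin t → κ) :
    t ^ 2 * ∑ f : V → Fin t, #{p : V × V | F.Adj p.1 p.2 ∧ χ (p.1, f p.1) = χ (p.2, f p.2)}
      = t ^ Fintype.card V *
          #{q : (V × Fin t) × (V × Fin t) | (F.blowup t).Adj q.1 q.2 ∧ χ q.1 = χ q.2} := by
  let mono (u v : V) (i j : Fin t) : ℕ := if F.Adj u v ∧ χ (u, i) = χ (v, j) then 1 else 0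
  have hlhs :
      ∑ f : V → Fin t, #{p : V × V | F.Adj p.1 p.2 ∧ χ (p.1, f p.1) = χ (p.2, f p.2)}
        = ∑ u, ∑ v, ∑ f : V → Fin t, mono u v (f u) (f v) := by
    simp only [card_filter]
    rw [sum_comm, Fintype.sum_prod_type]
  have hrhs : #{q : (V × Fin t) × (V × Fin t) | (F.blowup t).Adj q.1 q.2 ∧ χ q.1 = χ q.2}
      = ∑ u, ∑ v, ∑ i, ∑ j, mono u v i j := by
    simp only [card_filter, Fintype.sum_prod_type]
    exact sum_congr rfl fun u _ ↦ sum_comm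
  rw [hlhs, hrhs, mul_sum, mul_sum]
  refine sum_congr rfl fun u _ ↦ ?_
  rw [mul_sum, mul_sum]
  refine sum_congr rfl fun v _ ↦ ?_
  by_cases huv : F.Adj u v
  · rw [sum_fun_apply_apply huv.ne, Fintype.card_fin, smul_eq_mul, ← mul_assoc, ← pow_add,
      Nat.add_sub_cancel' (Fintype.one_lt_card_iff.2 ⟨u, v, huv.ne⟩)]
  · simp [mono, huv]

end SimpleGraph

theorem stmt_5 {V : Type*} [Fintype V] (F : SimpleGraph V) (α : ℚ)
    (h : ∀ χ : V → Bool,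
      (Nat.card {e : Sym2 V // e ∈ F.edgeSet ∧ ∃ c, ∀ x ∈ e, χ x = c} : ℚ)
        ≥ (1 - α) * Nat.card F.edgeSet) :
    ∀ t : ℕ, 1 ≤ t → ∀ χ : V × Fin t → Bool,
      (Nat.card {e : Sym2 (V × Fin t) // e ∈ (F.blowup t).edgeSet ∧ ∃ c, ∀ x ∈ e, χ x = c} : ℚ)
        ≥ (1 - α) * Nat.card F.edgeSet * t ^ 2 := by
  classical
  intro t ht χ
  set bound : ℚ := (1 - α) * Nat.card F.edgeSet
  have htransversal (f : V → Fin t) :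
      2 * bound ≤ #{p : V × V | F.Adj p.1 p.2 ∧ χ (p.1, f p.1) = χ (p.2, f p.2)} := by
    rw [← F.two_mul_card_monochromatic_edges (fun v ↦ χ (v, f v))]
    push_cast
    linarith [h fun v ↦ χ (v, f v)]
  have hsum := sum_le_sum fun f (_ : f ∈ univ) ↦ htransversal f
  rw [sum_const, card_univ, Fintype.card_fun, Fintype.card_fin, nsmul_eq_mul] at hsum
  push_cast at hsum
  have hcount := congrArg (Nat.cast : ℕ → ℚ)
    (F.sq_mul_sum_card_transversal_eq_pow_mul_card_blowup t χ)
  rw [← (F.blowup t).two_mul_card_monochromatic_edges χ] at hcount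
  push_cast at hcount
  have hkey := (mul_le_mul_of_nonneg_left hsum (sq_nonneg (t : ℚ))).trans_eq hcount
  have htn : (0 : ℚ) < t ^ Fintype.card V * 2 :=
    mul_pos (pow_pos (by exact_mod_cast ht) _) two_pos
  rw [ge_iff_le, ← mul_le_mul_iff_right₀ htn]
  linarith
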